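/- Let α ∈ (0,1). There exists a constant C > 0 depending only on d and α such that for every everywhere differentiable u : ℝ^d → ℝ, ‖∇u‖_{L_∞(ℝ^d)} ≤ C Σ_{k=0}^∞ 2^{k(1−α)} sup_{x_0∈ℝ^d} [u]_{Λ^α(B_{2^{−k}}(x_0))} + C sup{ |u(x)−u(x')| : x, x' ∈ ℝ^d, |x−x'| = 1 }, and the first sum is further bounded by C Σ_{k=0}^∞ 2^{k(1−α)} sup_{x_0∈ℝ^d} inf_{p∈𝒫_1} [u−p]_{α;B_{2^{−k}}(x_0)}. -/

import Mathlib

/-!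
The difference quotients `D n = 2ⁿ (u (x + 2⁻ⁿ h) - u x)` along a unit vector `h` converge to
`∇u(x) · h`, and consecutive ones differ by `-2ᵏ` times a second difference of `u` with step
`2^{-(k+1)} h` centred in a ball of radius `2^{-k}`. Telescoping bounds `|∇u(x) · h|` by
`|D 0| = |u (x + h) - u x|` plus `Σₖ 2ᵏ 2^{-(k+1)α} [u]_{Λ^α(B_{2^{-k}})}`; taking
`h = ∇u(x) / |∇u(x)|` gives the first inequality with `C = 2`. The second one holds termwise:
second differences do not see affine functions and are bounded by twice the Hölder seminorm.
-/

open MeasureTheory Metric Filter Set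
open scoped ENNReal Topology

noncomputable section

/-- Hölder seminorm `[u]_{γ;Ω}` (valued in `ℝ≥0∞`). -/
def holderSemi {E F : Type*} [NormedAddCommGroup E] [NormedAddCommGroup F]
    (γ : ℝ) (Ω : Set E) (u : E → F) : ℝ≥0∞ :=
  ⨆ (x : E) (_ : x ∈ Ω) (y : E) (_ : y ∈ Ω) (_ : x ≠ y),
    ENNReal.ofReal (‖u x - u y‖ / ‖x - y‖ ^ γ)

/-- Zygmund seminorm `[u]_{Λ^α(Ω)}` (valued in `ℝ≥0∞`). -/
def zygmundSemi {E : Type*} [NormedAddCommGroup E] (α : ℝ) (Ω : Set E) (u : E → ℝ) : ℝ≥0∞ :=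
  ⨆ (x : E) (h : E) (_ : h ≠ 0) (_ : x ∈ Ω) (_ : x + h ∈ Ω) (_ : x - h ∈ Ω),
    ENNReal.ofReal (|u (x + h) + u (x - h) - 2 * u x| / ‖h‖ ^ α)

/-- The `L_∞` norm of `u` on `Ω` (valued in `ℝ≥0∞`). -/
def eSupNorm {E : Type*} (Ω : Set E) (u : E → ℝ) : ℝ≥0∞ :=
  ⨆ (x : E) (_ : x ∈ Ω), ENNReal.ofReal |u x|

/-- A Dini function: nonnegative, nondecreasing on `(0,∞)`, with `∫_0^1 ω(r)/r dr < ∞`. -/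
def IsDini (ω : ℝ → ℝ) : Prop :=
  (∀ r, 0 < r → 0 ≤ ω r) ∧ MonotoneOn ω (Set.Ioi (0:ℝ)) ∧
    IntegrableOn (fun r => ω r / r) (Set.Ioc (0:ℝ) 1)

lemma enorm_le_add_tsum_enorm_sub_of_tendsto {F : Type*} [NormedAddCommGroup F] {D : ℕ → F}
    {L : F} (hD : Tendsto D atTop (𝓝 L)) :
    ‖L‖ₑ ≤ ‖D 0‖ₑ + ∑' k, ‖D (k + 1) - D k‖ₑ := by
  have partial_le : ∀ n, ‖D n‖ₑ ≤ ‖D 0‖ₑ + ∑ k ∈ Finset.range n, ‖D (k + 1) - D k‖ₑ := by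
    intro n
    induction n with
    | zero => simp
    | succ n ih =>
      calc ‖D (n + 1)‖ₑ = ‖D n + (D (n + 1) - D n)‖ₑ := by rw [add_sub_cancel]
        _ ≤ ‖D n‖ₑ + ‖D (n + 1) - D n‖ₑ := enorm_add_le _ _
        _ ≤ _ := by rw [Finset.sum_range_succ, ← add_assoc]; gcongr
  exact le_of_tendsto' hD.enorm fun n =>
    (partial_le n).trans (add_le_add_right (ENNReal.sum_le_tsum _) _)

section Seminorms

variable {E : Type*} [NormedAddCommGroup E]

lemma ofReal_abs_sub_div_le_holderSemi {γ : ℝ} {Ω : Set E} {v : E → ℝ} {x y : E}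
    (hx : x ∈ Ω) (hy : y ∈ Ω) (hxy : x ≠ y) :
    ENNReal.ofReal (|v x - v y| / ‖x - y‖ ^ γ) ≤ holderSemi γ Ω v :=
  le_iSup_of_le x <| le_iSup_of_le hx <| le_iSup_of_le y <| le_iSup_of_le hy <|
    le_iSup_of_le hxy le_rfl

lemma zygmundSemi_le_two_mul_holderSemi (α : ℝ) (Ω : Set E) (v : E → ℝ) :
    zygmundSemi α Ω v ≤ 2 * holderSemi α Ω v := by
  refine iSup_le fun x => iSup_le fun h => iSup_le fun hh => iSup_le fun hx =>
    iSup_le fun hxp => iSup_le fun hxm => ?_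
  have hplus : ENNReal.ofReal (|v (x + h) - v x| / ‖h‖ ^ α) ≤ holderSemi α Ω v := by
    simpa using ofReal_abs_sub_div_le_holderSemi (γ := α) (v := v) hxp hx (by simpa using hh)
  have hminus : ENNReal.ofReal (|v (x - h) - v x| / ‖h‖ ^ α) ≤ holderSemi α Ω v := by
    simpa using ofReal_abs_sub_div_le_holderSemi (γ := α) (v := v) hxm hx (by simpa using hh)
  have hsplit : |v (x + h) + v (x - h) - 2 * v x| ≤ |v (x + h) - v x| + |v (x - h) - v x| := by
    simpa only [two_mul, add_sub_add_comm] using abs_add_le (v (x + h) - v x) (v (x - h) - v x)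
  calc ENNReal.ofReal (|v (x + h) + v (x - h) - 2 * v x| / ‖h‖ ^ α)
      ≤ ENNReal.ofReal (|v (x + h) - v x| / ‖h‖ ^ α + |v (x - h) - v x| / ‖h‖ ^ α) := by
        rw [← add_div]; gcongr
    _ ≤ ENNReal.ofReal (|v (x + h) - v x| / ‖h‖ ^ α) +
        ENNReal.ofReal (|v (x - h) - v x| / ‖h‖ ^ α) := ENNReal.ofReal_add_le
    _ ≤ 2 * holderSemi α Ω v := by rw [two_mul]; exact add_le_add hplus hminus

lemma ofReal_abs_secondDiff_le_zygmundSemi {α r : ℝ} {u : E → ℝ} {c w : E}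
    (hw : w ≠ 0) (hwr : ‖w‖ < r) :
    ENNReal.ofReal |u (c + w) + u (c - w) - 2 * u c| ≤
      ENNReal.ofReal (‖w‖ ^ α) * zygmundSemi α (ball c r) u := by
  have hquot : ENNReal.ofReal (|u (c + w) + u (c - w) - 2 * u c| / ‖w‖ ^ α) ≤
      zygmundSemi α (ball c r) u :=
    le_iSup_of_le c <| le_iSup_of_le w <| le_iSup_of_le hw <|
      le_iSup_of_le (mem_ball_self ((norm_nonneg w).trans_lt hwr)) <|
      le_iSup_of_le (by simpa [dist_eq_norm] using hwr) <|
      le_iSup_of_le (by simpa [dist_eq_norm] using hwr) le_rfl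
  have hpos : 0 < ‖w‖ ^ α := Real.rpow_pos_of_pos (norm_pos_iff.2 hw) α
  calc ENNReal.ofReal |u (c + w) + u (c - w) - 2 * u c|
      = ENNReal.ofReal (‖w‖ ^ α) *
          ENNReal.ofReal (|u (c + w) + u (c - w) - 2 * u c| / ‖w‖ ^ α) := by
        rw [← ENNReal.ofReal_mul hpos.le, mul_div_cancel₀ _ hpos.ne']
    _ ≤ _ := mul_le_mul_right hquot _

lemma zygmundSemi_sub_affine [InnerProductSpace ℝ E] (α a0 : ℝ) (b : E) (Ω : Set E)
    (u : E → ℝ) :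
    zygmundSemi α Ω (fun y => u y - (a0 + (inner ℝ b y : ℝ))) = zygmundSemi α Ω u := by
  unfold zygmundSemi
  refine iSup_congr fun x => iSup_congr fun h => iSup_congr fun _ => iSup_congr fun _ =>
    iSup_congr fun _ => iSup_congr fun _ => ?_
  simp only [inner_add_right, inner_sub_right]
  ring_nf

lemma zygmundSemi_le_two_mul_iInf_holderSemi_sub_affine [InnerProductSpace ℝ E] (α : ℝ)
    (Ω : Set E) (u : E → ℝ) :
    zygmundSemi α Ω u ≤
      2 * ⨅ (a0 : ℝ) (b : E), holderSemi α Ω (fun x => u x - (a0 + (inner ℝ b x : ℝ))) := by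
  simp only [ENNReal.mul_iInf_of_ne two_ne_zero ENNReal.ofNat_ne_top]
  refine le_iInf₂ fun a0 b => ?_
  rw [← zygmundSemi_sub_affine α a0 b Ω u]
  exact zygmundSemi_le_two_mul_holderSemi _ _ _

end Seminorms

section Dyadic

variable {E : Type*} [NormedAddCommGroup E]

def unitStepOscillation (u : E → ℝ) : ℝ≥0∞ :=
  ⨆ (x : E) (x' : E) (_ : ‖x - x'‖ = 1), ENNReal.ofReal |u x - u x'|

def dyadicZygmundSum (α : ℝ) (u : E → ℝ) : ℝ≥0∞ :=
  ∑' k : ℕ, ENNReal.ofReal ((2:ℝ) ^ ((k:ℝ) * (1 - α))) *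
    ⨆ x0 : E, zygmundSemi α (ball x0 ((2:ℝ) ^ (-(k:ℝ)))) u

lemma dyadicZygmundSum_le_two_mul [InnerProductSpace ℝ E] (α : ℝ) (u : E → ℝ) :
    dyadicZygmundSum α u ≤
      2 * ∑' k : ℕ, ENNReal.ofReal ((2:ℝ) ^ ((k:ℝ) * (1 - α))) *
        ⨆ x0 : E, ⨅ (a0 : ℝ) (b : E),
          holderSemi α (ball x0 ((2:ℝ) ^ (-(k:ℝ)))) (fun x => u x - (a0 + (inner ℝ b x : ℝ))) := by
  rw [← ENNReal.tsum_mul_left]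
  refine ENNReal.tsum_le_tsum fun k => ?_
  rw [mul_left_comm]
  gcongr
  exact iSup_le fun x0 => (zygmundSemi_le_two_mul_iInf_holderSemi_sub_affine α _ u).trans
    (mul_le_mul_right (le_iSup_of_le x0 le_rfl) (2 : ℝ≥0∞))

variable [NormedSpace ℝ E]

def dyadicQuotient (u : E → ℝ) (x h : E) (n : ℕ) : ℝ :=
  2 ^ n * (u (x + ((2:ℝ) ^ n)⁻¹ • h) - u x)

lemma tendsto_dyadicQuotient {u : E → ℝ} {x : E} (hu : DifferentiableAt ℝ u x) (h : E) :
    Tendsto (dyadicQuotient u x h) atTop (𝓝 (fderiv ℝ u x h)) := by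
  have hgrow : Tendsto (fun n : ℕ => ‖(2:ℝ) ^ n‖) atTop atTop := by
    simpa using tendsto_pow_atTop_atTop_of_one_lt one_lt_two
  have hlim := hu.hasFDerivAt.lim h hgrow
  simp only [smul_eq_mul] at hlim
  exact hlim

lemma dyadicQuotient_succ_sub (u : E → ℝ) (x h : E) (k : ℕ) :
    let w := ((2:ℝ) ^ (k + 1))⁻¹ • h
    dyadicQuotient u x h (k + 1) - dyadicQuotient u x h k =
      -(2 ^ k * (u (x + w + w) + u (x + w - w) - 2 * u (x + w))) := by
  intro w
  have hdouble : x + w + w = x + ((2:ℝ) ^ k)⁻¹ • h := by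
    rw [add_assoc, ← two_smul ℝ w, smul_smul, pow_succ]
    congr 2
    field_simp
  have hsucc : dyadicQuotient u x h (k + 1) = 2 * 2 ^ k * (u (x + w) - u x) := by
    show (2:ℝ) ^ (k + 1) * (u (x + w) - u x) = _
    rw [pow_succ']
  rw [hsucc, dyadicQuotient, ← hdouble, add_sub_cancel_right]
  ring

lemma two_pow_mul_inv_two_pow_succ_rpow (k : ℕ) (α : ℝ) :
    (2:ℝ) ^ k * ((2:ℝ) ^ (k + 1))⁻¹ ^ α = 2 ^ (-α) * 2 ^ ((k:ℝ) * (1 - α)) := by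
  have h2 : (0:ℝ) ≤ 2 := zero_le_two
  rw [← Real.rpow_natCast, ← Real.rpow_natCast, ← Real.rpow_neg h2, ← Real.rpow_mul h2,
    ← Real.rpow_add two_pos, ← Real.rpow_add two_pos]
  push_cast
  ring_nf

lemma ofReal_abs_dyadicQuotient_succ_sub_le {u : E → ℝ} {x h : E} (hh : ‖h‖ = 1) (α : ℝ)
    (k : ℕ) :
    ENNReal.ofReal |dyadicQuotient u x h (k + 1) - dyadicQuotient u x h k| ≤
      ENNReal.ofReal (2 ^ (-α)) * (ENNReal.ofReal ((2:ℝ) ^ ((k:ℝ) * (1 - α))) *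
        ⨆ x0 : E, zygmundSemi α (ball x0 ((2:ℝ) ^ (-(k:ℝ)))) u) := by
  set w := ((2:ℝ) ^ (k + 1))⁻¹ • h
  have hwnorm : ‖w‖ = ((2:ℝ) ^ (k + 1))⁻¹ := by simp [w, norm_smul, hh]
  have hwne : w ≠ 0 := by rw [← norm_ne_zero_iff, hwnorm]; positivity
  have hwr : ‖w‖ < (2:ℝ) ^ (-(k:ℝ)) := by
    rw [hwnorm, Real.rpow_neg zero_le_two, Real.rpow_natCast]
    exact inv_strictAnti₀ (by positivity) (pow_lt_pow_right₀ one_lt_two k.lt_succ_self)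
  calc ENNReal.ofReal |dyadicQuotient u x h (k + 1) - dyadicQuotient u x h k|
      = ENNReal.ofReal (2 ^ k) *
          ENNReal.ofReal |u (x + w + w) + u (x + w - w) - 2 * u (x + w)| := by
        rw [dyadicQuotient_succ_sub, abs_neg, abs_mul, abs_of_pos (by positivity),
          ENNReal.ofReal_mul (by positivity)]
    _ ≤ ENNReal.ofReal (2 ^ k) * (ENNReal.ofReal (‖w‖ ^ α) *
          ⨆ x0 : E, zygmundSemi α (ball x0 ((2:ℝ) ^ (-(k:ℝ)))) u) := by
        gcongr
        exact (ofReal_abs_secondDiff_le_zygmundSemi (α := α) hwne hwr).trans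
          (by gcongr; exact le_iSup_of_le (x + w) le_rfl)
    _ = _ := by
        rw [← mul_assoc, ← ENNReal.ofReal_mul (by positivity), hwnorm,
          two_pow_mul_inv_two_pow_succ_rpow, ENNReal.ofReal_mul (by positivity), mul_assoc]

lemma ofReal_abs_fderiv_apply_le {u : E → ℝ} {x h : E} (hu : DifferentiableAt ℝ u x)
    (hh : ‖h‖ = 1) (α : ℝ) :
    ENNReal.ofReal |fderiv ℝ u x h| ≤
      unitStepOscillation u + ENNReal.ofReal (2 ^ (-α)) * dyadicZygmundSum α u := by
  have hfirst : ENNReal.ofReal |dyadicQuotient u x h 0| ≤ unitStepOscillation u :=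
    le_iSup_of_le (x + h) <| le_iSup_of_le x <| le_iSup_of_le (by simpa using hh) <|
      by simp [dyadicQuotient]
  calc ENNReal.ofReal |fderiv ℝ u x h|
      ≤ ENNReal.ofReal |dyadicQuotient u x h 0| + ∑' k, ENNReal.ofReal
          |dyadicQuotient u x h (k + 1) - dyadicQuotient u x h k| := by
        simpa only [Real.enorm_eq_ofReal_abs] using
          enorm_le_add_tsum_enorm_sub_of_tendsto (tendsto_dyadicQuotient hu h)
    _ ≤ _ := by
      rw [dyadicZygmundSum, ← ENNReal.tsum_mul_left]
      exact add_le_add hfirst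
        (ENNReal.tsum_le_tsum (ofReal_abs_dyadicQuotient_succ_sub_le hh α))

end Dyadic

lemma ofReal_norm_gradient_le {E : Type*} [NormedAddCommGroup E] [InnerProductSpace ℝ E]
    [CompleteSpace E] {u : E → ℝ} {x : E}
    (hu : DifferentiableAt ℝ u x) (α : ℝ) :
    ENNReal.ofReal ‖gradient u x‖ ≤
      unitStepOscillation u + ENNReal.ofReal (2 ^ (-α)) * dyadicZygmundSum α u := by
  set g := gradient u x
  rcases eq_or_ne g 0 with hg | hg
  · simp [hg]
  have hunit : ‖‖g‖⁻¹ • g‖ = 1 := by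
    rw [norm_smul, norm_inv, norm_norm, inv_mul_cancel₀ (norm_ne_zero_iff.2 hg)]
  have hdir : fderiv ℝ u x (‖g‖⁻¹ • g) = ‖g‖ := by
    rw [show fderiv ℝ u x (‖g‖⁻¹ • g) = inner ℝ g (‖g‖⁻¹ • g) from
        InnerProductSpace.toDual_symm_apply.symm, real_inner_smul_right,
      real_inner_self_eq_norm_sq]
    field_simp
  have hbound := ofReal_abs_fderiv_apply_le hu hunit α
  rwa [hdir, abs_norm] at hbound

theorem gradient_bound_zygmund_series_general
    (d : ℕ) (α : ℝ) (hα : 0 < α) :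
    ∃ C : ℝ, 0 < C ∧
      ∀ u : EuclideanSpace ℝ (Fin d) → ℝ, Differentiable ℝ u →
        (⨆ x : EuclideanSpace ℝ (Fin d), ENNReal.ofReal ‖gradient u x‖) ≤
            ENNReal.ofReal C *
              (∑' k : ℕ, ENNReal.ofReal ((2:ℝ) ^ ((k:ℝ) * (1 - α))) *
                ⨆ x0 : EuclideanSpace ℝ (Fin d),
                  zygmundSemi α (ball x0 ((2:ℝ) ^ (-(k:ℝ)))) u)
            + ENNReal.ofReal C *
              ⨆ (x : EuclideanSpace ℝ (Fin d)) (x' : EuclideanSpace ℝ (Fin d))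
                (_ : ‖x - x'‖ = 1), ENNReal.ofReal |u x - u x'| ∧
          (∑' k : ℕ, ENNReal.ofReal ((2:ℝ) ^ ((k:ℝ) * (1 - α))) *
              ⨆ x0 : EuclideanSpace ℝ (Fin d),
                zygmundSemi α (ball x0 ((2:ℝ) ^ (-(k:ℝ)))) u) ≤
            ENNReal.ofReal C *
              ∑' k : ℕ, ENNReal.ofReal ((2:ℝ) ^ ((k:ℝ) * (1 - α))) *
                ⨆ x0 : EuclideanSpace ℝ (Fin d),
                  ⨅ (a0 : ℝ) (b : EuclideanSpace ℝ (Fin d)),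
                    holderSemi α (ball x0 ((2:ℝ) ^ (-(k:ℝ))))
                      (fun x => u x - (a0 + (inner ℝ b x : ℝ))) := by
  refine ⟨2, two_pos, fun u hu => ?_⟩
  rw [ENNReal.ofReal_ofNat]
  refine ⟨iSup_le fun x => (ofReal_norm_gradient_le (hu x) α).trans ?_,
    dyadicZygmundSum_le_two_mul α u⟩
  have hweight : ENNReal.ofReal (2 ^ (-α)) ≤ 2 := by
    rw [← ENNReal.ofReal_ofNat]
    exact ENNReal.ofReal_le_ofReal ((Real.rpow_le_one_of_one_le_of_nonpos one_le_two
      (neg_nonpos.2 hα.le)).trans one_le_two)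
  rw [add_comm]
  exact add_le_add (mul_le_mul_left hweight _) (le_mul_of_one_le_left' one_le_two)

/-- Gradient bound in terms of a series of Zygmund seminorms (`σ = 1` case of Lemma 2.3). -/
theorem gradient_bound_zygmund_series
    (d : ℕ) (hd : 1 ≤ d) (α : ℝ) (hα : 0 < α) (hα1 : α < 1) :
    ∃ C : ℝ, 0 < C ∧
      ∀ u : EuclideanSpace ℝ (Fin d) → ℝ, Differentiable ℝ u →
        (⨆ x : EuclideanSpace ℝ (Fin d), ENNReal.ofReal ‖gradient u x‖) ≤
            ENNReal.ofReal C *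
              (∑' k : ℕ, ENNReal.ofReal ((2:ℝ) ^ ((k:ℝ) * (1 - α))) *
                ⨆ x0 : EuclideanSpace ℝ (Fin d),
                  zygmundSemi α (ball x0 ((2:ℝ) ^ (-(k:ℝ)))) u)
            + ENNReal.ofReal C *
              ⨆ (x : EuclideanSpace ℝ (Fin d)) (x' : EuclideanSpace ℝ (Fin d))
                (_ : ‖x - x'‖ = 1), ENNReal.ofReal |u x - u x'| ∧
          (∑' k : ℕ, ENNReal.ofReal ((2:ℝ) ^ ((k:ℝ) * (1 - α))) *
              ⨆ x0 : EuclideanSpace ℝ (Fin d),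
                zygmundSemi α (ball x0 ((2:ℝ) ^ (-(k:ℝ)))) u) ≤
            ENNReal.ofReal C *
              ∑' k : ℕ, ENNReal.ofReal ((2:ℝ) ^ ((k:ℝ) * (1 - α))) *
                ⨆ x0 : EuclideanSpace ℝ (Fin d),
                  ⨅ (a0 : ℝ) (b : EuclideanSpace ℝ (Fin d)),
                    holderSemi α (ball x0 ((2:ℝ) ^ (-(k:ℝ))))
                      (fun x => u x - (a0 + (inner ℝ b x : ℝ))) :=
  gradient_bound_zygmund_series_general d α hα
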